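/- arXiv:2309.07885 — 3 statements merged into one kernel-verified Lean document; each statement's English description precedes it below -/
import Mathlib

section
/- The Tits alternative is stable under extensions: if 1 → K → G → H → 1 is a short exact sequence of groups and both K and H satisfy the Tits alternative, then G satisfies the Tits alternative. -/
/-!
Given `L ≤ G`, apply the alternative in `K` to `L ∩ ker ψ` and in `H` to `ψ(L)`. A free subgroup of
`L ∩ ker ψ` lies in `L`, and free generators of a free subgroup of `ψ(L)` lift to free generators
in `L`. It remains to show that a group `X` with a virtually solvable normal subgroup `N` and a
virtually solvable quotient is virtually solvable; passing to a subgroup of finite index, we may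
assume `X ⧸ N` solvable. A normal solvable subgroup of finite index of `N` with minimal index is
characteristic in `N`, hence normal in `X`. Modulo it `X` is finite-by-solvable, and there the
centralizer of the finite normal subgroup has finite index and is solvable.
-/

/-- A group is virtually solvable if it has a solvable subgroup of finite index. -/
def IsVirtuallySolvable (G : Type*) [Group G] : Prop :=
  ∃ H : Subgroup G, IsSolvable H ∧ H.FiniteIndex

/-- A group satisfies the Tits alternative if every subgroup is either virtually
solvable or contains a nonabelian free group (a copy of the free group of rank 2). -/
def SatisfiesTitsAlternative (G : Type*) [Group G] : Prop :=
  ∀ H : Subgroup G, IsVirtuallySolvable H ∨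
    ∃ φ : FreeGroup (Fin 2) →* H, Function.Injective φ

open Subgroup

section

variable {G G' : Type*} [Group G] [Group G']

lemma Subgroup.isSolvable_of_le {A B : Subgroup G} (h : A ≤ B) [Group.IsSolvable B] :
    Group.IsSolvable A :=
  Group.isSolvable_of_isSolvable_injective (inclusion_injective h)

lemma Subgroup.isSolvable_map (f : G →* G') (A : Subgroup G) [Group.IsSolvable A] :
    Group.IsSolvable (A.map f) :=
  Group.isSolvable_of_surjective (f.subgroupMap_surjective A)

lemma Subgroup.isSolvable_sup (A B : Subgroup G) [A.Normal] [Group.IsSolvable A]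
    [Group.IsSolvable B] : Group.IsSolvable ↥(A ⊔ B) := by
  let q := (QuotientGroup.mk' A).comp (A ⊔ B).subtype
  have hker : q.rangeRestrict.ker ≤ (inclusion (le_sup_left : A ≤ A ⊔ B)).range := by
    intro x hx
    rw [MonoidHom.ker_rangeRestrict, MonoidHom.mem_ker] at hx
    exact ⟨⟨x, (QuotientGroup.eq_one_iff _).mp hx⟩, rfl⟩
  have hran : q.range = B.map (QuotientGroup.mk' A) := by
    rw [MonoidHom.range_comp, range_subtype, map_sup, QuotientGroup.map_mk'_self, bot_sup_eq]
  have : Group.IsSolvable q.range := hran ▸ isSolvable_map _ B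
  exact Group.isSolvable_of_ker_le_range _ q.rangeRestrict hker

instance Subgroup.finiteIndex_comap (f : G →* G') (S : Subgroup G') [S.FiniteIndex] :
    (S.comap f).FiniteIndex :=
  ⟨by rw [index_comap]; exact isFiniteRelIndex_of_finiteIndex.relIndex_ne_zero⟩

namespace IsVirtuallySolvable

lemma of_injective (f : G →* G') (hf : Function.Injective f) (h : IsVirtuallySolvable G') :
    IsVirtuallySolvable G := by
  obtain ⟨S, hS, hfin⟩ := h
  have : Group.IsSolvable S := hS
  refine ⟨S.comap f, ?_, inferInstance⟩
  refine Group.isSolvable_of_isSolvable_injective (f := f.subgroupComap S) fun a b hab => ?_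
  exact Subtype.ext (hf (congrArg Subtype.val hab))

lemma of_finiteIndex {H : Subgroup G} [H.FiniteIndex] (h : IsVirtuallySolvable H) :
    IsVirtuallySolvable G := by
  obtain ⟨S, hS, hfin⟩ := h
  have : Group.IsSolvable S := hS
  exact ⟨S.map H.subtype, isSolvable_map _ S,
    ⟨by rw [index_map_subtype]; exact mul_ne_zero hfin.index_ne_zero FiniteIndex.index_ne_zero⟩⟩

/-- Among the normal solvable subgroups of finite index, one of minimal index contains all its
images under automorphisms, since their join is another such subgroup. -/
lemma exists_characteristic (h : IsVirtuallySolvable G) :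
    ∃ J : Subgroup G, J.Characteristic ∧ Group.IsSolvable J ∧ J.FiniteIndex := by
  let 𝒥 : Set (Subgroup G) := {J | J.Normal ∧ Group.IsSolvable J ∧ J.FiniteIndex}
  have h𝒥 : 𝒥.Nonempty := by
    obtain ⟨S, hS, hfin⟩ := h
    have : Group.IsSolvable S := hS
    exact ⟨S.normalCore, normalCore_normal S, isSolvable_of_le S.normalCore_le, inferInstance⟩
  obtain ⟨J, ⟨hJn, hJs, hJf⟩, hmin⟩ := (measure Subgroup.index).wf.has_min 𝒥 h𝒥
  have hsup : ∀ ϕ : G ≃* G, J ⊔ J.map ϕ.toMonoidHom ∈ 𝒥 := fun ϕ => by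
    have : (J.map ϕ.toMonoidHom).Normal := hJn.map _ ϕ.surjective
    have : Group.IsSolvable (J.map ϕ.toMonoidHom) := isSolvable_map _ J
    exact ⟨inferInstance, isSolvable_sup _ _, finiteIndex_of_le le_sup_left⟩
  refine ⟨J, characteristic_iff_map_le.mpr fun ϕ => ?_, hJs, hJf⟩
  by_contra hle
  exact hmin _ (hsup ϕ) (index_strictAnti (left_lt_sup.mpr hle))

/-- The kernel of the conjugation action on the finite group `ker f` has finite index; its
intersection with `ker f` is central in it, hence abelian, and its image under `f` is solvable. -/
lemma of_finite_ker (f : G →* G') [Group.IsSolvable G'] [Finite f.ker] :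
    IsVirtuallySolvable G := by
  let c : G →* MulAut f.ker := MulAut.conjNormal
  let g : c.ker →* G' := f.comp c.ker.subtype
  have : Group.IsSolvable g.ker := Group.isSolvable_of_comm fun a b => by
    have hab : c (a : c.ker) ⟨b, b.2⟩ = ⟨b, b.2⟩ := by rw [(a : c.ker).2]; rfl
    have hab' : (a : G) * b * (a : G)⁻¹ = b := congrArg Subtype.val hab
    ext
    exact mul_inv_eq_iff_eq_mul.mp hab'
  exact ⟨c.ker, Group.isSolvable_of_ker_le_range g.ker.subtype g (range_subtype _).ge,
    inferInstance⟩

lemma of_isSolvable_ker (f : G →* G') (hker : Group.IsSolvable f.ker)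
    (h : IsVirtuallySolvable G') : IsVirtuallySolvable G := by
  obtain ⟨S, hS, hfin⟩ := h
  have : Group.IsSolvable S := hS
  have hle : (f.subgroupComap S).ker ≤ (inclusion (f.ker_le_comap S)).range :=
    fun x hx => ⟨⟨x, congrArg Subtype.val hx⟩, rfl⟩
  exact ⟨S.comap f, Group.isSolvable_of_ker_le_range _ _ hle, inferInstance⟩

lemma of_ker_of_isSolvable (f : G →* G') [Group.IsSolvable G'] (h : IsVirtuallySolvable f.ker) :
    IsVirtuallySolvable G := by
  obtain ⟨J, hJc, hJs, hJf⟩ := h.exists_characteristic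
  let R : Subgroup G := J.map f.ker.subtype
  let q : G →* G ⧸ R := QuotientGroup.mk' R
  let g : f.ker →* G ⧸ R := q.comp f.ker.subtype
  have : g.ker.FiniteIndex := finiteIndex_of_le fun x hx =>
    (QuotientGroup.eq_one_iff _).mpr (mem_map_of_mem _ hx)
  have : Finite g.range := Finite.of_equiv _ (QuotientGroup.quotientKerEquivRange g).toEquiv
  let f' : G ⧸ R →* G' := QuotientGroup.lift R f (map_subtype_le J)
  have hle : f'.ker ≤ g.range := by
    rintro ⟨x⟩ hx
    exact ⟨⟨x, hx⟩, rfl⟩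
  have : Finite f'.ker := Finite.of_injective _ (inclusion_injective hle)
  have : Group.IsSolvable q.ker := by
    rw [QuotientGroup.ker_mk']
    exact isSolvable_map _ J
  exact of_isSolvable_ker q this (of_finite_ker f')

lemma of_ker_of_range (f : G →* G') (hker : IsVirtuallySolvable f.ker)
    (hran : IsVirtuallySolvable f.range) : IsVirtuallySolvable G := by
  obtain ⟨S, hS, hfin⟩ := hran
  have : Group.IsSolvable S := hS
  let g : S.comap f.rangeRestrict →* S := f.rangeRestrict.subgroupComap S
  let j : g.ker →* f.ker := ((S.comap _).subtype.comp g.ker.subtype).codRestrict f.ker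
    fun x => congrArg (fun y : S => ((y : f.range) : G')) x.2
  have hj : Function.Injective j := fun a b hab => Subtype.ext <| Subtype.ext <|
    congrArg (fun y : f.ker => (y : G)) hab
  exact (of_ker_of_isSolvable g (hker.of_injective j hj)).of_finiteIndex

end IsVirtuallySolvable

lemma SatisfiesTitsAlternative.isVirtuallySolvable_or_free_of_injective
    (hG' : SatisfiesTitsAlternative G') (f : G →* G') (hf : Function.Injective f) :
    IsVirtuallySolvable G ∨ ∃ φ : FreeGroup (Fin 2) →* G, Function.Injective φ := by
  let e : G ≃* f.range := MonoidHom.ofInjective hf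
  refine (hG' f.range).imp (fun h => h.of_injective e.toMonoidHom e.injective) ?_
  rintro ⟨φ, hφ⟩
  exact ⟨e.symm.toMonoidHom.comp φ, e.symm.injective.comp hφ⟩

lemma exists_injective_freeGroup_of_range {ι : Type*} (f : G →* G')
    (χ : FreeGroup ι →* f.range) (hχ : Function.Injective χ) :
    ∃ φ : FreeGroup ι →* G, Function.Injective φ := by
  choose s hs using fun i => (χ (FreeGroup.of i)).2
  have hlift : f.comp (FreeGroup.lift s) = f.range.subtype.comp χ :=
    FreeGroup.ext_hom _ _ fun i => by simp [hs]
  refine ⟨FreeGroup.lift s, Function.Injective.of_comp (f := f) ?_⟩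
  rw [← MonoidHom.coe_comp, hlift, MonoidHom.coe_comp]
  exact f.range.subtype_injective.comp hχ

end

theorem titsAlternative_of_extension_general
    {K G H : Type*} [Group K] [Group G] [Group H]
    (φ : K →* G) (ψ : G →* H) (hφ : Function.Injective φ)
    (hexact : φ.range = ψ.ker)
    (hK : SatisfiesTitsAlternative K) (hH : SatisfiesTitsAlternative H) :
    SatisfiesTitsAlternative G := by
  intro L
  let θ : L →* H := ψ.comp L.subtype
  let k : θ.ker →* φ.range :=
    (L.subtype.comp θ.ker.subtype).codRestrict φ.range fun x => hexact ▸ x.2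
  have hk : Function.Injective k := fun a b hab => Subtype.ext <| Subtype.ext <|
    congrArg (fun y : φ.range => (y : G)) hab
  let ι : θ.ker →* K := (MonoidHom.ofInjective hφ).symm.toMonoidHom.comp k
  have hι : Function.Injective ι := (MonoidHom.ofInjective hφ).symm.injective.comp hk
  obtain hker | ⟨χ, hχ⟩ := hK.isVirtuallySolvable_or_free_of_injective ι hι
  · obtain hran | ⟨χ, hχ⟩ := hH θ.range
    · exact Or.inl (hker.of_ker_of_range θ hran)
    · exact Or.inr (exists_injective_freeGroup_of_range θ χ hχ)
  · exact Or.inr ⟨θ.ker.subtype.comp χ, θ.ker.subtype_injective.comp hχ⟩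

/-- The Tits alternative is stable under extensions: if `1 → K → G → H → 1` is a short
exact sequence of groups and both `K` and `H` satisfy the Tits alternative, then so
does `G`. -/
theorem titsAlternative_of_extension
    {K G H : Type*} [Group K] [Group G] [Group H]
    (φ : K →* G) (ψ : G →* H) (hφ : Function.Injective φ)
    (hψ : Function.Surjective ψ) (hexact : φ.range = ψ.ker)
    (hK : SatisfiesTitsAlternative K) (hH : SatisfiesTitsAlternative H) :
    SatisfiesTitsAlternative G :=
  titsAlternative_of_extension_general φ ψ hφ hexact hK hH
end

section
/- Let R be the group of locally constant functions from a topological space E to a free group F_n, with pointwise multiplication. Then any two non-commuting elements of R generate a subgroup isomorphic to the free group F₂. -/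
open Function Set

/-- Any partial injection on a finite type extends to a permutation. -/
lemma exists_perm_extend {α : Type*} [Fintype α] [DecidableEq α]
    (p : α → Prop) (u : α → α) (hinj : Set.InjOn u {x | p x}) :
    ∃ σ : Equiv.Perm α, ∀ x, p x → σ x = u x := by
  classical
  set s : Set α := {x | p x} with hs
  set t : Set α := u '' s with ht
  have hbij : Set.BijOn u s t := ⟨Set.mapsTo_image u s, hinj, Set.surjOn_image u s⟩
  have hcard : Fintype.card (sᶜ : Set α) = Fintype.card (tᶜ : Set α) := by
    have h1 : Fintype.card s = Fintype.card t := Fintype.card_congr (hbij.equiv u)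
    have := Fintype.card_compl_set s
    have := Fintype.card_compl_set t
    omega
  have e2 : (sᶜ : Set α) ≃ (tᶜ : Set α) := Fintype.equivOfCardEq hcard
  refine ⟨((Equiv.Set.sumCompl s).symm.trans
    (((hbij.equiv u).sumCongr e2).trans (Equiv.Set.sumCompl t))), ?_⟩
  intro x hx
  have hxs : x ∈ s := hx
  simp only [Equiv.trans_apply]
  rw [Equiv.Set.sumCompl_symm_apply_of_mem (s := s) hxs,
    Equiv.sumCongr_apply, Sum.map_inl, Equiv.Set.sumCompl_apply_inl]
  rfl

lemma toWord_no_adj {α : Type*} [DecidableEq α] (w : FreeGroup α) (j : ℕ) (x : α) (b : Bool)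
    (h1 : w.toWord[j]? = some (x, b)) (h2 : w.toWord[j+1]? = some (x, !b)) : False := by
  obtain ⟨hj1, he1⟩ := List.getElem?_eq_some_iff.1 h1
  obtain ⟨hj2, he2⟩ := List.getElem?_eq_some_iff.1 h2
  have hred : FreeGroup.reduce w.toWord = w.toWord := w.reduce_toWord
  have hdec : w.toWord = w.toWord.take j ++ (x, b) :: (x, !b) :: w.toWord.drop (j + 2) := by
    conv_lhs => rw [← List.take_append_drop j w.toWord]
    congr 1
    rw [List.drop_eq_getElem_cons hj1, he1, List.drop_eq_getElem_cons hj2, he2]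
  exact FreeGroup.reduce.not (hred.trans hdec)

lemma toWord_rev_no_adj {α : Type*} [DecidableEq α] (w : FreeGroup α) (j : ℕ) (x : α) (b : Bool)
    (h1 : w.toWord.reverse[j]? = some (x, b)) (h2 : w.toWord.reverse[j+1]? = some (x, !b)) :
    False := by
  obtain ⟨hj1, he1⟩ := List.getElem?_eq_some_iff.1 h1
  obtain ⟨hj2, he2⟩ := List.getElem?_eq_some_iff.1 h2
  have hlen : j + 1 < w.toWord.length := by simpa using hj2
  have k1 : w.toWord.reverse[j]'hj1 = w.toWord[w.toWord.length - 1 - j]'(by omega) :=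
    List.getElem_reverse hj1
  have k2 : w.toWord.reverse[j+1]'hj2 = w.toWord[w.toWord.length - 1 - (j+1)]'(by omega) :=
    List.getElem_reverse hj2
  apply toWord_no_adj w (w.toWord.length - 1 - (j+1)) x (!b)
  · exact List.getElem?_eq_some_iff.2 ⟨by omega, by rw [← k2]; exact he2⟩
  · rw [Bool.not_not]
    have harith : w.toWord.length - 1 - (j+1) + 1 = w.toWord.length - 1 - j := by omega
    rw [harith]
    exact List.getElem?_eq_some_iff.2 ⟨by omega, by rw [← k1]; exact he1⟩

/-- Residual finiteness of free groups, permutation form. -/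
lemma freeGroup_exists_perm_hom {α : Type*} [DecidableEq α] (w : FreeGroup α) (hw : w ≠ 1) :
    ∃ (m : ℕ) (f : FreeGroup α →* Equiv.Perm (Fin (m+1))), f w ≠ 1 := by
  classical
  set L := w.toWord with hLdef
  set k := L.length with hk
  have hk0 : k ≠ 0 := by
    simp only [hk, hLdef, ne_eq, List.length_eq_zero_iff]
    rw [FreeGroup.toWord_eq_nil_iff]
    exact hw
  set M := L.reverse with hM
  have hMlen : M.length = k := by simp [hM, hk]
  have key : ∀ g : α, ∃ σ : Equiv.Perm (Fin (k+1)), ∀ x : Fin (k+1),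
      (M[(x:ℕ)]? = some (g, true) → ((σ x : ℕ) = (x:ℕ) + 1)) ∧
      (M[(x:ℕ)]? = some (g, false) → ((σ⁻¹ x : ℕ) = (x:ℕ) + 1)) := by
    intro g
    set p : Fin (k+1) → Prop := fun x =>
      (M[(x:ℕ)]? = some (g, true)) ∨ (∃ j : ℕ, (x:ℕ) = j+1 ∧ M[j]? = some (g, false)) with hp
    set u : Fin (k+1) → Fin (k+1) := fun x =>
      if h : M[(x:ℕ)]? = some (g, true) then
        ⟨(x:ℕ)+1, by have := (List.getElem?_eq_some_iff.1 h).1; omega⟩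
      else ⟨(x:ℕ)-1, by have := x.isLt; omega⟩ with hu
    have hinj : Set.InjOn u {x | p x} := by
      intro x hx y hy hxy
      simp only [Set.mem_setOf_eq, hp] at hx hy
      by_cases hAx : M[(x:ℕ)]? = some (g, true) <;>
        by_cases hAy : M[(y:ℕ)]? = some (g, true)
      · have ex : (u x : ℕ) = (x:ℕ)+1 := by simp [hu, hAx]
        have ey : (u y : ℕ) = (y:ℕ)+1 := by simp [hu, hAy]
        rw [hxy] at ex
        apply Fin.ext; omega
      · obtain ⟨j, hj, hMj⟩ := hy.resolve_left hAy
        have hAy' : ¬ M[j+1]? = some (g, true) := by rw [← hj]; exact hAy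
        have ex : (u x : ℕ) = (x:ℕ)+1 := by simp [hu, hAx]
        have ey : (u y : ℕ) = j := by simp [hu, hj, hAy']
        rw [hxy] at ex
        exfalso
        apply toWord_rev_no_adj w (x:ℕ) g true hAx
        show M[(x:ℕ)+1]? = some (g, !true)
        have : (x:ℕ)+1 = j := by omega
        rw [this]; simpa using hMj
      · obtain ⟨j, hj, hMj⟩ := hx.resolve_left hAx
        have hAx' : ¬ M[j+1]? = some (g, true) := by rw [← hj]; exact hAx
        have ex : (u x : ℕ) = j := by simp [hu, hj, hAx']
        have ey : (u y : ℕ) = (y:ℕ)+1 := by simp [hu, hAy]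
        rw [hxy] at ex
        exfalso
        apply toWord_rev_no_adj w (y:ℕ) g true hAy
        show M[(y:ℕ)+1]? = some (g, !true)
        have : (y:ℕ)+1 = j := by omega
        rw [this]; simpa using hMj
      · obtain ⟨j, hj, hMj⟩ := hx.resolve_left hAx
        obtain ⟨j', hj', hMj'⟩ := hy.resolve_left hAy
        have hAx' : ¬ M[j+1]? = some (g, true) := by rw [← hj]; exact hAx
        have hAy' : ¬ M[j'+1]? = some (g, true) := by rw [← hj']; exact hAy
        have ex : (u x : ℕ) = j := by simp [hu, hj, hAx']
        have ey : (u y : ℕ) = j' := by simp [hu, hj', hAy']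
        rw [hxy] at ex
        apply Fin.ext; omega
    obtain ⟨σ, hσ⟩ := exists_perm_extend p u hinj
    refine ⟨σ, fun x => ⟨fun hA => ?_, fun hB => ?_⟩⟩
    · rw [hσ x (Or.inl hA)]
      simp [hu, hA]
    · have hxk : (x:ℕ) < k := by
        have := (List.getElem?_eq_some_iff.1 hB).1
        rw [hMlen] at this; omega
      set y : Fin (k+1) := ⟨(x:ℕ)+1, by omega⟩ with hy
      have hpy : p y := Or.inr ⟨(x:ℕ), rfl, hB⟩
      have hnA : ¬ (M[(y:ℕ)]? = some (g, true)) := by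
        intro hcon
        exact toWord_rev_no_adj w (x:ℕ) g false hB (by simpa using hcon)
      have hyx : σ y = x := by
        rw [hσ y hpy]
        simp only [hu, hnA, dif_neg, not_false_iff]
        apply Fin.ext; simp [hy]
      have hfin : σ⁻¹ x = y := by rw [← hyx, Equiv.Perm.inv_def, Equiv.symm_apply_apply]
      rw [hfin, hy]
  choose σ hσ using key
  refine ⟨k, FreeGroup.lift σ, fun hcon => ?_⟩
  have claim : ∀ n, ∀ hn : n ≤ k,
      (((L.drop (k - n)).map (fun gb => cond gb.2 (σ gb.1) (σ gb.1)⁻¹)).prod) 0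
        = ⟨n, Nat.lt_succ_of_le hn⟩ := by
    intro n
    induction n with
    | zero =>
      intro _
      have hnil : L.drop k = [] := by rw [hk]; simp
      rw [Nat.sub_zero, hnil]
      apply Fin.ext; simp
    | succ n ih =>
      intro hn
      have hik : k - (n+1) < L.length := by omega
      rw [List.drop_eq_getElem_cons hik]
      have hdrop : k - (n+1) + 1 = k - n := by omega
      rw [List.map_cons, List.prod_cons, hdrop]
      rw [Equiv.Perm.mul_apply, ih (by omega)]
      have hn' : n < M.length := by rw [hMlen]; omega
      have hMn : M[n]? = some (L[k - (n+1)]'hik) := by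
        rw [List.getElem?_eq_some_iff]
        refine ⟨hn', ?_⟩
        have hrev : M[n]'hn' = L[L.length - 1 - n]'(by omega) := List.getElem_reverse hn'
        rw [hrev]
        congr 1
        omega
      rcases hgb : L[k - (n+1)]'hik with ⟨g, b⟩
      rw [hgb] at hMn
      cases b
      · simp only [cond_false]
        have := (hσ g ⟨n, by omega⟩).2 (by simpa using hMn)
        apply Fin.ext
        simpa using this
      · simp only [cond_true]
        have := (hσ g ⟨n, by omega⟩).1 (by simpa using hMn)
        apply Fin.ext
        simpa using this
  have h1 : FreeGroup.lift σ w = ((L.map (fun gb => cond gb.2 (σ gb.1) (σ gb.1)⁻¹)).prod) := by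
    conv_lhs => rw [← FreeGroup.mk_toWord (x := w)]
    exact FreeGroup.lift_mk
  have h2 := claim k le_rfl
  rw [Nat.sub_self, List.drop_zero] at h2
  rw [← h1, hcon] at h2
  have h3 := congrArg Fin.val h2
  simp at h3
  omega

lemma freeGroup_hopfian {ι : Type*} [Finite ι] [DecidableEq ι]
    (s : FreeGroup ι →* FreeGroup ι) (hs : Surjective s) : Injective s := by
  rw [injective_iff_map_eq_one]
  intro w hw1
  by_contra hw
  obtain ⟨m, f, hf⟩ := freeGroup_exists_perm_hom w hw
  haveI : Finite (FreeGroup ι →* Equiv.Perm (Fin (m+1))) :=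
    Finite.of_equiv _ (FreeGroup.lift (β := Equiv.Perm (Fin (m+1))))
  have hinj : Injective (fun g : FreeGroup ι →* Equiv.Perm (Fin (m+1)) => g.comp s) := by
    intro g1 g2 hg
    apply FreeGroup.ext_hom
    intro x
    obtain ⟨y, hy⟩ := hs (FreeGroup.of x)
    rw [← hy]
    exact DFunLike.congr_fun hg y
  obtain ⟨g, hg⟩ := Finite.injective_iff_surjective.1 hinj f
  apply hf
  have := DFunLike.congr_fun hg w
  simp only [MonoidHom.comp_apply] at this
  rw [← this, hw1, map_one]

lemma freeGroup_comm_of_subsingleton {T : Type*} [Subsingleton T] (x y : FreeGroup T) :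
    x * y = y * x := by
  rcases isEmpty_or_nonempty T with hT | hT
  · exact Subsingleton.elim _ _
  · obtain ⟨t₀⟩ := hT
    have key : ∀ z : FreeGroup T, ∃ m : ℤ, z = FreeGroup.of t₀ ^ m := by
      intro z
      induction z using FreeGroup.induction_on with
      | C1 => exact ⟨0, by simp⟩
      | of t => exact ⟨1, by rw [Subsingleton.elim t t₀]; simp⟩
      | inv_of t ih =>
        obtain ⟨m, hm⟩ := ih
        exact ⟨-m, by rw [hm, zpow_neg]⟩
      | mul x y ihx ihy =>
        obtain ⟨m, hm⟩ := ihx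
        obtain ⟨m', hm'⟩ := ihy
        exact ⟨m + m', by rw [hm, hm', zpow_add]⟩
    obtain ⟨m, hm⟩ := key x
    obtain ⟨m', hm'⟩ := key y
    rw [hm, hm']
    exact ((Commute.refl _).zpow_zpow m m').eq

lemma lift_injective_of_not_commute {α : Type*} [DecidableEq α] {a b : FreeGroup α}
    (hab : a * b ≠ b * a) :
    Injective (FreeGroup.lift (![a, b] : Fin 2 → FreeGroup α)) := by
  classical
  set φab : FreeGroup (Fin 2) →* FreeGroup α := FreeGroup.lift ![a, b] with hφab
  set H : Subgroup (FreeGroup α) := φab.range with hH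
  set T := IsFreeGroup.Generators H with hT
  set e : H ≃* FreeGroup T := IsFreeGroup.toFreeGroup H with he
  set π : FreeGroup (Fin 2) →* H := φab.rangeRestrict with hπdef
  have hπ : Surjective π := φab.rangeRestrict_surjective
  set q : FreeGroup (Fin 2) →* FreeGroup T := e.toMonoidHom.comp π with hqdef
  have hq : Surjective q := e.surjective.comp hπ
  -- abelianization mod 2
  set ab : FreeGroup T →* Multiplicative (T →₀ ZMod 2) :=
    FreeGroup.lift (fun t => Multiplicative.ofAdd (Finsupp.single t (1 : ZMod 2))) with habdef
  have hab_surj : Surjective ab := by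
    suffices hsuff : ∀ f : T →₀ ZMod 2, ∃ x, ab x = Multiplicative.ofAdd f by
      intro f
      exact hsuff (Multiplicative.toAdd f)
    intro f
    induction f using Finsupp.induction with
    | zero => exact ⟨1, by simp⟩
    | single_add t v f _ _ ih =>
      obtain ⟨x, hx⟩ := ih
      refine ⟨FreeGroup.of t ^ v.val * x, ?_⟩
      rw [map_mul, map_pow, hx, habdef, FreeGroup.lift_apply_of]
      show Multiplicative.ofAdd (Finsupp.single t (1 : ZMod 2)) ^ v.val *
        Multiplicative.ofAdd f = Multiplicative.ofAdd (Finsupp.single t v + f)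
      rw [← ofAdd_nsmul, ← ofAdd_add]
      congr 1
      rw [Finsupp.smul_single]
      have hv : (v.val : ℕ) • (1 : ZMod 2) = v := by
        rw [nsmul_eq_mul, mul_one]
        exact ZMod.natCast_rightInverse v
      rw [hv]
  set Φ : FreeGroup (Fin 2) →* Multiplicative (T →₀ ZMod 2) := ab.comp q with hΦdef
  have hΦ : Surjective Φ := hab_surj.comp hq
  set c : Fin 2 → (T →₀ ZMod 2) := fun i => Multiplicative.toAdd (Φ (FreeGroup.of i)) with hc
  have hmem : ∀ w, Multiplicative.toAdd (Φ w) ∈ Submodule.span (ZMod 2) (Set.range c) := by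
    intro w
    induction w using FreeGroup.induction_on with
    | C1 => rw [map_one]; exact Submodule.zero_mem _
    | of t => exact Submodule.subset_span ⟨t, rfl⟩
    | inv_of t ih =>
      rw [map_inv]
      exact neg_mem ih
    | mul x y ihx ihy =>
      rw [map_mul]
      exact add_mem ihx ihy
  have hspan : Submodule.span (ZMod 2) (Set.range c) = ⊤ := by
    rw [eq_top_iff]
    rintro f -
    obtain ⟨w, hw⟩ := hΦ (Multiplicative.ofAdd f)
    have h2 := hmem w
    rw [hw] at h2
    simpa using h2
  have hrange : Set.range c = {c 0, c 1} := by
    ext x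
    constructor
    · rintro ⟨i, rfl⟩
      fin_cases i
      · exact Set.mem_insert _ _
      · exact Set.mem_insert_of_mem _ rfl
    · rintro (rfl | rfl)
      · exact ⟨0, rfl⟩
      · exact ⟨1, rfl⟩
  have hrank : Module.rank (ZMod 2) (T →₀ ZMod 2) ≤ 2 := by
    rw [← rank_top (ZMod 2) (T →₀ ZMod 2), ← hspan, hrange]
    refine (rank_span_le _).trans ?_
    refine (Cardinal.mk_insert_le).trans ?_
    rw [Cardinal.mk_singleton]
    norm_num
  have hTcard : Cardinal.mk T ≤ 2 := by
    rw [rank_finsupp_self] at hrank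
    simpa using hrank
  haveI hTfin : Finite T := by
    rw [← Cardinal.lt_aleph0_iff_finite]
    exact hTcard.trans_lt (by exact Cardinal.nat_lt_aleph0 2)
  haveI : Fintype T := Fintype.ofFinite T
  have haH : a ∈ H := ⟨FreeGroup.of 0, by simp [hφab]⟩
  have hbH : b ∈ H := ⟨FreeGroup.of 1, by simp [hφab]⟩
  have hTnontriv : Nontrivial T := by
    rw [← not_subsingleton_iff_nontrivial]
    intro hsub
    apply hab
    have hcomm := freeGroup_comm_of_subsingleton (e ⟨a, haH⟩) (e ⟨b, hbH⟩)
    rw [← map_mul, ← map_mul] at hcomm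
    have h2 := e.injective hcomm
    have h3 := Subtype.ext_iff.1 h2
    simpa using h3
  have hcard : Fintype.card T = 2 := by
    have h1 : Fintype.card T ≤ 2 := by
      have := hTcard
      rw [Cardinal.mk_fintype] at this
      exact_mod_cast this
    have h2 : 1 < Fintype.card T := Fintype.one_lt_card
    omega
  set eqv : T ≃ Fin 2 := Fintype.equivFinOfCardEq hcard with heqv
  set ρ : FreeGroup T ≃* FreeGroup (Fin 2) := FreeGroup.freeGroupCongr eqv with hρ
  have hssurj : Surjective (ρ.toMonoidHom.comp q) := ρ.surjective.comp hq
  have hinj := freeGroup_hopfian _ hssurj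
  intro x y hxy
  apply hinj
  simp only [MonoidHom.comp_apply, hqdef, MulEquiv.coe_toMonoidHom]
  congr 1
  have hπeq : π x = π y := Subtype.ext hxy
  rw [hπeq]

/-- In the group of locally constant functions from a topological space `E` to a free
group `F_n` of rank `n ≥ 2` (pointwise multiplication), any two non-commuting elements
generate a subgroup isomorphic to the free group of rank 2. -/
theorem noncommuting_locallyConstant_generate_free
    {E : Type*} [TopologicalSpace E] (n : ℕ) (hn : 2 ≤ n)
    (φ ψ : LocallyConstant E (FreeGroup (Fin n))) (h : φ * ψ ≠ ψ * φ) :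
    Nonempty (FreeGroup (Fin 2) ≃*
      (Subgroup.closure {φ, ψ} : Subgroup (LocallyConstant E (FreeGroup (Fin n))))) := by
  have hexe : ∃ e : E, φ e * ψ e ≠ ψ e * φ e := by
    by_contra hcon
    push_neg at hcon
    apply h
    ext e
    exact hcon e
  obtain ⟨e, he⟩ := hexe
  have hinj_ab := lift_injective_of_not_commute he
  set lφψ : FreeGroup (Fin 2) →* LocallyConstant E (FreeGroup (Fin n)) :=
    FreeGroup.lift ![φ, ψ] with hlφψ
  have hcomp : (LocallyConstant.evalMonoidHom e).comp lφψ = FreeGroup.lift ![φ e, ψ e] := by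
    apply FreeGroup.ext_hom
    intro i
    fin_cases i <;>
      simp [hlφψ, LocallyConstant.evalMonoidHom]
  have hinj : Injective lφψ := by
    intro x y hxy
    apply hinj_ab
    have h1 := DFunLike.congr_fun hcomp x
    have h2 := DFunLike.congr_fun hcomp y
    simp only [MonoidHom.comp_apply] at h1 h2
    rw [← h1, ← h2, hxy]
  have hrange : lφψ.range = Subgroup.closure {φ, ψ} := by
    rw [hlφψ, FreeGroup.range_lift_eq_closure]
    congr 1
    ext x
    simp [Fin.exists_fin_two]
    tauto
  exact ⟨(MonoidHom.ofInjective hinj).trans (MulEquiv.subgroupCongr hrange)⟩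
end

section
/- The group R of locally constant functions from a topological space E to a free group F_n satisfies the strong Tits alternative: every subgroup of R is either abelian or contains a nonabelian free group. -/
/-!
If `a b ∈ H` do not commute, they fail to commute at some point `e : E`. Evaluation at `e` maps
`H` onto a subgroup of `F_n`, which is free by Nielsen–Schreier and nonabelian, hence of rank at
least two, so it contains `F_2`. Since free groups are projective, `F_2` lifts injectively
along the surjection from `H`.
-/

open Function

theorem FreeGroup.commute_of_subsingleton {ι : Type*} [Subsingleton ι] (u v : FreeGroup ι) :
    Commute u v := by
  induction u using FreeGroup.induction_on with
  | C1 => exact Commute.one_left v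
  | of x =>
    induction v using FreeGroup.induction_on with
    | C1 => exact Commute.one_right _
    | of y => rw [Subsingleton.elim x y]
    | inv_of y h => exact h.inv_right
    | mul y z hy hz => exact hy.mul_right hz
  | inv_of x h => exact h.inv_left
  | mul x y hx hy => exact hx.mul_left hy

namespace IsFreeGroup

variable {G : Type*} [Group G] [IsFreeGroup G]

theorem nontrivial_generators_of_not_commute {x y : G} (h : ¬Commute x y) :
    Nontrivial (Generators G) := by
  by_contra hG
  rw [not_nontrivial_iff_subsingleton] at hG
  apply h
  simpa using (FreeGroup.commute_of_subsingleton (toFreeGroup G x) (toFreeGroup G y)).map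
    (toFreeGroup G).symm

theorem exists_injective_freeGroup_fin_two_of_not_commute {x y : G} (h : ¬Commute x y) :
    ∃ φ : FreeGroup (Fin 2) →* G, Injective φ := by
  have := nontrivial_generators_of_not_commute h
  obtain ⟨i, j, hij⟩ := exists_pair_ne (Generators G)
  refine ⟨(toFreeGroup G).symm.toMonoidHom.comp (FreeGroup.map ![i, j]),
    (toFreeGroup G).symm.injective.comp (FreeGroup.map_injective ?_)⟩
  intro s t hst
  fin_cases s <;> fin_cases t <;> simp_all

end IsFreeGroup

theorem FreeGroup.exists_injective_lift_of_surjective {α G G' : Type*} [Group G] [Group G']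
    {f : G →* G'} (hf : Surjective f) {ψ : FreeGroup α →* G'} (hψ : Injective ψ) :
    ∃ φ : FreeGroup α →* G, Injective φ := by
  let φ : FreeGroup α →* G := FreeGroup.lift fun a => surjInv hf (ψ (FreeGroup.of a))
  have hfφ : f.comp φ = ψ := FreeGroup.ext_hom _ _ fun a => by simp [φ, surjInv_eq hf]
  exact ⟨φ, Injective.of_comp (f := f) (by rwa [← MonoidHom.coe_comp, hfφ])⟩

theorem exists_injective_freeGroup_fin_two_of_surjective_onto_free {G G' : Type*} [Group G]
    [Group G'] [IsFreeGroup G'] {f : G →* G'} (hf : Surjective f) {x y : G'}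
    (h : ¬Commute x y) : ∃ φ : FreeGroup (Fin 2) →* G, Injective φ :=
  let ⟨_, hψ⟩ := IsFreeGroup.exists_injective_freeGroup_fin_two_of_not_commute h
  FreeGroup.exists_injective_lift_of_surjective hf hψ

/-- The group of locally constant functions from a topological space `E` to a free group
`F_n` satisfies the strong Tits alternative: every subgroup is either abelian or
contains a nonabelian free group. -/
theorem locallyConstant_strong_tits_alternative
    {E : Type*} [TopologicalSpace E] (n : ℕ)
    (H : Subgroup (LocallyConstant E (FreeGroup (Fin n)))) :
    (∀ a ∈ H, ∀ b ∈ H, a * b = b * a) ∨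
      ∃ φ : FreeGroup (Fin 2) →* H, Function.Injective φ := by
  refine or_iff_not_imp_left.2 fun hH => ?_
  push Not at hH
  obtain ⟨a, ha, b, hb, hab⟩ := hH
  obtain ⟨e, he⟩ : ∃ e, (a * b) e ≠ (b * a) e := by
    by_contra! h
    exact hab (LocallyConstant.ext h)
  let f := (LocallyConstant.evalMonoidHom e).comp H.subtype
  refine exists_injective_freeGroup_fin_two_of_surjective_onto_free f.rangeRestrict_surjective
    (x := f.rangeRestrict ⟨a, ha⟩) (y := f.rangeRestrict ⟨b, hb⟩) fun hcomm => he ?_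
  simpa [f, Subtype.ext_iff] using hcomm.eq
end
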